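/- Let z ∈ ℝ, ρ₀ ∈ ℝ with 1 + zρ₀ ≠ 0, and let m > 0 be real. Let b : ℕ → ℝ, define d_k = (1/k!) Σ_{ν=0}^{k−1} Σ_{λ=0}^{ν} ν! (ν−λ+1)_{k−1−ν} b_{k−1−ν} c_λ for k ≥ 1, and let c : ℕ → ℝ satisfy the recursion c_0 = b_0/(1+zρ₀)² and c_k = c_{k−1}/(1+zρ₀) + b_k/(1+zρ₀)² − z d_k/(1+zρ₀) for all k ≥ 1. Assume the series Σ_{k≥0} k! b_k/(m)_{k+1}, Σ_{k≥0} k! c_k/(m)_{k+1}, Σ_{k≥0} k! c_k/(m+1)_{k+1}, Σ_{k≥1} k! c_{k−1}/(m)_{k+1}, and Σ_{k≥1} k! d_k/(m)_{k+1} are all summable, and that the product identity (Σ_{k≥0} k! b_k/(m)_{k+1})·(Σ_{k≥0} k! c_k/(m)_{k+1}) = Σ_{k≥1} k! d_k/(m)_{k+1} holds. Define r_m = ρ₀ + Σ_{k≥0} k! b_k/(m)_{k+1}, φ_m = ρ₀/(1+zρ₀) + Σ_{k≥0} k! c_k/(m)_{k+1}, and φ_{m+1} = ρ₀/(1+zρ₀)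 + Σ_{k≥0} k! c_k/(m+1)_{k+1}. Then φ_{m+1} = r_m · (1 − z φ_m). -/

import Mathlib

/-- The Pochhammer symbol `(x)_j = x(x+1)⋯(x+j−1)`, with `(x)_0 = 1`. -/
noncomputable def poch (x : ℝ) (j : ℕ) : ℝ := ∏ i ∈ Finset.range j, (x + i)

/-- The coefficients `d_k` of the product of two inverse factorial series with
coefficient sequences `b` and `c`:
`d_k = (1/k!) Σ_{ν=0}^{k−1} Σ_{λ=0}^{ν} ν! (ν−λ+1)_{k−1−ν} b_{k−1−ν} c_λ`. -/
noncomputable def prodCoeff (b c : ℕ → ℝ) (k : ℕ) : ℝ :=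
  (1 / (Nat.factorial k : ℝ)) *
    ∑ ν ∈ Finset.range k, ∑ l ∈ Finset.range (ν + 1),
      (Nat.factorial ν : ℝ) * poch ((ν : ℝ) - l + 1) (k - 1 - ν) * b (k - 1 - ν) * c l

lemma poch_pos {x : ℝ} (hx : 0 < x) (j : ℕ) : 0 < poch x j :=
  Finset.prod_pos fun i _ => by positivity

lemma poch_succ (x : ℝ) (j : ℕ) : poch x (j + 1) = poch x j * (x + j) :=
  Finset.prod_range_succ _ _

lemma poch_shift (x : ℝ) (j : ℕ) : poch x (j + 1) = poch (x + 1) j * x := by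
  unfold poch
  rw [Finset.prod_range_succ']
  congr 1
  · exact Finset.prod_congr rfl fun i _ => by push_cast; ring
  · simp

lemma key_diff {m : ℝ} (hm : 0 < m) (a : ℝ) (k : ℕ) :
    (Nat.factorial k : ℝ) * a / poch (m + 1) (k + 1)
      = (Nat.factorial k : ℝ) * a / poch m (k + 1)
        - (Nat.factorial (k + 1) : ℝ) * a / poch m (k + 2) := by
  have hP := (poch_pos hm (k + 1)).ne'
  have hP' := (poch_pos (by linarith : (0:ℝ) < m + 1) (k + 1)).ne'
  have h1 : poch m (k + 2) = poch m (k + 1) * (m + (k + 1 : ℕ)) := poch_succ m (k + 1)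
  have h2 : poch m (k + 2) = poch (m + 1) (k + 1) * m := poch_shift m (k + 1)
  have hrel : poch (m + 1) (k + 1) * m = poch m (k + 1) * (m + (k + 1 : ℕ)) := by
    rw [← h2, ← h1]
  have hk1 : ((k + 1).factorial : ℝ) = (k + 1) * (k.factorial) := by
    push_cast [Nat.factorial_succ]; ring
  have hmk : (m + ((k:ℝ) + 1)) ≠ 0 := by positivity
  rw [h1, hk1]
  push_cast at hrel ⊢
  field_simp
  linear_combination (-a) * hrel

set_option maxHeartbeats 1000000 in
/-- If the coefficients `c_k` satisfy the recursion
`c_0 = b_0/(1+zρ₀)²`, `c_k = c_{k−1}/(1+zρ₀) + b_k/(1+zρ₀)² − z d_k/(1+zρ₀)` (`k ≥ 1`),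
and all the relevant inverse factorial series are summable, with the product identity
`(Σ_{k≥0} k! b_k/(m)_{k+1})·(Σ_{k≥0} k! c_k/(m)_{k+1}) = Σ_{k≥1} k! d_k/(m)_{k+1}`,
then `φ_{m+1} = r_m · (1 − z φ_m)`, where
`r_m = ρ₀ + Σ_{k≥0} k! b_k/(m)_{k+1}` and
`φ_s = ρ₀/(1+zρ₀) + Σ_{k≥0} k! c_k/(s)_{k+1}` for `s = m, m+1`. -/
theorem convFactor_recursion_solves_difference_equation
    (z ρ₀ : ℝ) (hρ : 1 + z * ρ₀ ≠ 0) (m : ℝ) (hm : 0 < m) (b c : ℕ → ℝ)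
    (hc0 : c 0 = b 0 / (1 + z * ρ₀) ^ 2)
    (hck : ∀ k : ℕ, c (k + 1) = c k / (1 + z * ρ₀) + b (k + 1) / (1 + z * ρ₀) ^ 2
      - z * prodCoeff b c (k + 1) / (1 + z * ρ₀))
    (hsb : Summable fun k : ℕ => (Nat.factorial k : ℝ) * b k / poch m (k + 1))
    (hsc : Summable fun k : ℕ => (Nat.factorial k : ℝ) * c k / poch m (k + 1))
    (hsc' : Summable fun k : ℕ => (Nat.factorial k : ℝ) * c k / poch (m + 1) (k + 1))
    (hshift : Summable fun k : ℕ => (Nat.factorial (k + 1) : ℝ) * c k / poch m (k + 2))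
    (hsd : Summable fun k : ℕ =>
      (Nat.factorial (k + 1) : ℝ) * prodCoeff b c (k + 1) / poch m (k + 2))
    (hprod : (∑' k : ℕ, (Nat.factorial k : ℝ) * b k / poch m (k + 1))
        * (∑' k : ℕ, (Nat.factorial k : ℝ) * c k / poch m (k + 1))
      = ∑' k : ℕ, (Nat.factorial (k + 1) : ℝ) * prodCoeff b c (k + 1) / poch m (k + 2)) :
    ρ₀ / (1 + z * ρ₀) + ∑' k : ℕ, (Nat.factorial k : ℝ) * c k / poch (m + 1) (k + 1)
      = (ρ₀ + ∑' k : ℕ, (Nat.factorial k : ℝ) * b k / poch m (k + 1))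
        * (1 - z * (ρ₀ / (1 + z * ρ₀)
            + ∑' k : ℕ, (Nat.factorial k : ℝ) * c k / poch m (k + 1))) := by
  have hA : (1 + z * ρ₀) ≠ 0 := hρ
  have hpoch1 : poch m 1 = m := by simp [poch]
  set Sb := ∑' k : ℕ, (Nat.factorial k : ℝ) * b k / poch m (k + 1) with hSbdef
  set Sc := ∑' k : ℕ, (Nat.factorial k : ℝ) * c k / poch m (k + 1) with hScdef
  set T := ∑' k : ℕ, (Nat.factorial (k + 1) : ℝ) * c k / poch m (k + 2) with hTdef
  -- Step A : the (m+1)-series equals Sc - T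
  have hstepA : (∑' k : ℕ, (Nat.factorial k : ℝ) * c k / poch (m + 1) (k + 1)) = Sc - T := by
    rw [tsum_congr (fun k => key_diff hm (c k) k)]
    exact Summable.tsum_sub hsc hshift
  -- shifted summabilities
  have hbs : Summable (fun k : ℕ => (Nat.factorial (k + 1) : ℝ) * b (k + 1) / poch m (k + 2)) := by
    have h := (summable_nat_add_iff
      (f := fun k : ℕ => (Nat.factorial k : ℝ) * b k / poch m (k + 1)) 1).2 hsb
    simpa using h
  have hcs : Summable (fun k : ℕ => (Nat.factorial (k + 1) : ℝ) * c (k + 1) / poch m (k + 2)) := by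
    have h := (summable_nat_add_iff
      (f := fun k : ℕ => (Nat.factorial k : ℝ) * c k / poch m (k + 1)) 1).2 hsc
    simpa using h
  -- shift identities
  have hSbshift : (∑' k : ℕ, (Nat.factorial (k + 1) : ℝ) * b (k + 1) / poch m (k + 2))
      = Sb - b 0 / m := by
    have h := Summable.tsum_eq_zero_add hsb
    rw [hpoch1] at h
    simp only [Nat.factorial_zero, Nat.cast_one, one_mul] at h
    rw [hSbdef, h]; ring
  have hScshift : (∑' k : ℕ, (Nat.factorial (k + 1) : ℝ) * c (k + 1) / poch m (k + 2))
      = Sc - c 0 / m := by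
    have h := Summable.tsum_eq_zero_add hsc
    rw [hpoch1] at h
    simp only [Nat.factorial_zero, Nat.cast_one, one_mul] at h
    rw [hScdef, h]; ring
  -- expand the recursion pointwise
  have expand : ∀ k : ℕ, (Nat.factorial (k + 1) : ℝ) * c (k + 1) / poch m (k + 2)
      = (1 / (1 + z * ρ₀)) * ((Nat.factorial (k + 1) : ℝ) * c k / poch m (k + 2))
        + (1 / (1 + z * ρ₀) ^ 2) * ((Nat.factorial (k + 1) : ℝ) * b (k + 1) / poch m (k + 2))
        - (z / (1 + z * ρ₀)) *
            ((Nat.factorial (k + 1) : ℝ) * prodCoeff b c (k + 1) / poch m (k + 2)) := by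
    intro k
    rw [hck k]
    have hP := (poch_pos hm (k + 2)).ne'
    field_simp
  -- master equation
  have master : Sc - c 0 / m
      = (1 / (1 + z * ρ₀)) * T + (1 / (1 + z * ρ₀) ^ 2) * (Sb - b 0 / m)
        - (z / (1 + z * ρ₀)) * (Sb * Sc) := by
    have h1 : (∑' k : ℕ, (Nat.factorial (k + 1) : ℝ) * c (k + 1) / poch m (k + 2))
        = (1 / (1 + z * ρ₀)) * T
          + (1 / (1 + z * ρ₀) ^ 2) *
              (∑' k : ℕ, (Nat.factorial (k + 1) : ℝ) * b (k + 1) / poch m (k + 2))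
          - (z / (1 + z * ρ₀)) *
              (∑' k : ℕ, (Nat.factorial (k + 1) : ℝ) * prodCoeff b c (k + 1) / poch m (k + 2)) := by
      rw [tsum_congr expand,
        Summable.tsum_sub ((hshift.mul_left _).add (hbs.mul_left _)) (hsd.mul_left _),
        Summable.tsum_add (hshift.mul_left _) (hbs.mul_left _),
        tsum_mul_left, tsum_mul_left, tsum_mul_left]
    rw [hScshift, hSbshift, ← hprod] at h1
    exact h1
  -- finish : solve for T and do the algebra
  rw [hstepA]
  have hm0 : m ≠ 0 := hm.ne'
  field_simp at master hc0 ⊢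
  have hN : ((1 + z * ρ₀) ^ 2 * m ^ 2) ≠ 0 :=
    mul_ne_zero (pow_ne_zero _ hA) (pow_ne_zero _ hm0)
  refine mul_left_cancel₀ hN ?_
  linear_combination ((1 + z * ρ₀) ^ 2 * m) * (master + hc0)
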